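/- Let α < 0. For every finitely supported real sequence (v_n)_{n≥0} with v_0 = 0, we have ∑_{n≥1} n^α (v_n − v_{n-1})² ≥ ((α−1)²/4) ∑_{n≥1} (n+1)^{α−2} v_n². -/

import Mathlib

/-!
Take the ground state `g n = (n + 1) ^ (γ + 1/2)` with `α = -2γ`. For any positive `g`,
completing the square gives `a (∇v)² ≥ a ∇g · ∇(v² / g)`, and summing by parts turns the right
side into `∑ -∇(a ∇g) · v² / g`. For power weights the discrete operator `-∇(a ∇g)` dominates
`(γ + 1/2)² (n + 2) ^ (α - 2) g`, which after rescaling by `r = 1 / (n + 2)` is an elementary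
inequality in `0 < r < 1`.
-/

open Finset Real

theorem hardy_of_positive_supersolution (a g w v : ℕ → ℝ) (N : ℕ)
    (ha : ∀ n, 0 ≤ a n) (hg : ∀ n, 0 < g n)
    (hsuper : ∀ n, w n * g (n + 1) ≤
      a n * (g (n + 1) - g n) - a (n + 1) * (g (n + 2) - g (n + 1)))
    (h0 : v 0 = 0) (hN : v N = 0) :
    ∑ n ∈ range N, w n * v (n + 1) ^ 2 ≤ ∑ n ∈ range N, a n * (v (n + 1) - v n) ^ 2 := by
  set P : ℕ → ℝ := fun n => a n * (g (n + 1) - g n)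
  set c : ℕ → ℝ := fun n => v n ^ 2 / g n
  have hweight : ∀ n, w n * v (n + 1) ^ 2 ≤ (P n - P (n + 1)) * c (n + 1) := fun n =>
    calc w n * v (n + 1) ^ 2 = w n * g (n + 1) * c (n + 1) := by
          simp only [c]; field_simp [(hg (n + 1)).ne']
      _ ≤ (P n - P (n + 1)) * c (n + 1) :=
          mul_le_mul_of_nonneg_right (hsuper n) (div_nonneg (sq_nonneg _) (hg _).le)
  -- `a (w' - w)² - a (g' - g) (w'² / g' - w² / g) = a (g w' - g' w)² / (g g')`
  have hsquare : ∀ n, P n * (c (n + 1) - c n) ≤ a n * (v (n + 1) - v n) ^ 2 := by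
    intro n
    have hgn := hg n
    have hgn' := hg (n + 1)
    simp only [P, c]
    rw [div_sub_div _ _ hgn'.ne' hgn.ne', mul_div_assoc', div_le_iff₀ (by positivity)]
    nlinarith [mul_nonneg (ha n) (sq_nonneg (g n * v (n + 1) - g (n + 1) * v n))]
  have hparts : ∑ n ∈ range N, (P n - P (n + 1)) * c (n + 1) =
      ∑ n ∈ range N, P n * (c (n + 1) - c n) := by
    have htele := sum_range_sub' (fun n => P n * c n) N
    simp only [c, h0, hN, zero_pow two_ne_zero, zero_div, mul_zero, sub_zero] at htele
    rw [← sub_eq_zero, ← sum_sub_distrib, ← htele]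
    exact sum_congr rfl fun n _ => by ring
  calc ∑ n ∈ range N, w n * v (n + 1) ^ 2
      ≤ ∑ n ∈ range N, (P n - P (n + 1)) * c (n + 1) := sum_le_sum fun n _ => hweight n
    _ = ∑ n ∈ range N, P n * (c (n + 1) - c n) := hparts
    _ ≤ ∑ n ∈ range N, a n * (v (n + 1) - v n) ^ 2 := sum_le_sum fun n _ => hsquare n

theorem one_add_mul_le_one_sub_rpow_neg {γ x : ℝ} (hγ : 0 ≤ γ) (hx : x < 1) :
    1 + γ * x ≤ (1 - x) ^ (-γ) := by
  have hpos : 0 < 1 - x := by linarith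
  have hlog : log (1 - x) ≤ -x := by linarith [log_le_sub_one_of_pos hpos]
  rw [rpow_def_of_pos hpos]
  nlinarith [add_one_le_exp (log (1 - x) * -γ)]

theorem sqrt_one_sub_add_sqrt_one_add_le {r : ℝ} (h0 : 0 ≤ r) (h1 : r ≤ 1) :
    √(1 - r) + √(1 + r) ≤ 2 - r ^ 2 / 4 := by
  have ha : √(1 - r) ^ 2 = 1 - r := sq_sqrt (by linarith)
  have hb : √(1 + r) ^ 2 = 1 + r := sq_sqrt (by linarith)
  nlinarith [sq_nonneg (√(1 - r) - √(1 + r)), sq_nonneg (√(1 - r) + √(1 + r) - 2),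
    sq_nonneg (√(1 - r) * √(1 + r) - 1), sq_nonneg (r * (√(1 - r) + √(1 + r)))]

theorem sq_mul_sq_le_rpow_combination {γ r : ℝ} (hγ : 0 < γ) (hr0 : 0 ≤ r) (hr1 : r < 1) :
    (γ + 1/2) ^ 2 * r ^ 2 ≤
      (1 - r) ^ (-(2 * γ)) - (1 - r) ^ (1/2 - γ) - (1 + r) ^ (1/2 + γ) + 1 := by
  have hm : 0 < 1 - r := by linarith
  have hp : 0 < 1 + r := by linarith
  have hu : 1 + γ * r ≤ (1 - r) ^ (-γ) := one_add_mul_le_one_sub_rpow_neg hγ.le hr1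
  have hw : 1 ≤ (1 + r) ^ γ := one_le_rpow (by linarith) hγ.le
  have hz : 1 + γ * r ^ 2 ≤ (1 - r ^ 2) ^ (-γ) :=
    one_add_mul_le_one_sub_rpow_neg hγ.le (by nlinarith)
  have huw : (1 - r) ^ (-γ) = (1 + r) ^ γ * (1 - r ^ 2) ^ (-γ) := by
    rw [show 1 - r ^ 2 = (1 - r) * (1 + r) by ring, mul_rpow hm.le hp.le, mul_left_comm,
      ← rpow_add hp, add_neg_cancel, rpow_zero, mul_one]
  have ht : 1 ≤ √(1 + r) := one_le_sqrt.mpr (by linarith)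
  have hst := sqrt_one_sub_add_sqrt_one_add_le hr0 hr1.le
  have e1 : (1 - r) ^ (-(2 * γ)) = ((1 - r) ^ (-γ)) ^ 2 := by
    rw [← rpow_natCast, ← rpow_mul hm.le]; ring_nf
  have e2 : (1 - r) ^ (1/2 - γ) = (1 - r) ^ (-γ) * √(1 - r) := by
    rw [sqrt_eq_rpow, ← rpow_add hm]; ring_nf
  have e3 : (1 + r) ^ (1/2 + γ) = √(1 + r) * (1 + r) ^ γ := by
    rw [sqrt_eq_rpow, ← rpow_add hp]
  rw [e1, e2, e3]
  set u := (1 - r) ^ (-γ)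
  set w := (1 + r) ^ γ
  set s := √(1 - r)
  set t := √(1 + r)
  have t1 : γ ^ 2 * r ^ 2 ≤ (u - 1) ^ 2 := by
    nlinarith [mul_nonneg (mul_nonneg hγ.le hr0) (show 0 ≤ u - 1 - γ * r by linarith)]
  have hu1 : 1 ≤ u := by nlinarith [mul_nonneg hγ.le hr0]
  have t2 : r ^ 2 / 4 ≤ u * (2 - s - t) := by
    nlinarith [mul_nonneg (sub_nonneg.mpr hu1) (show 0 ≤ 2 - s - t by nlinarith)]
  have t3 : γ * r ^ 2 ≤ t * (u - w) := by
    have hz1 : 0 ≤ (1 - r ^ 2) ^ (-γ) - 1 := by nlinarith [mul_nonneg hγ.le (sq_nonneg r)]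
    have hdiff : γ * r ^ 2 ≤ u - w := by nlinarith [mul_nonneg (sub_nonneg.mpr hw) hz1]
    nlinarith [mul_nonneg (sub_nonneg.mpr ht) (hdiff.trans' (by positivity))]
  -- `u² - u s - t w + 1 = (u - 1)² + u (2 - s - t) + t (u - w)`
  linear_combination t1 + t2 + t3

theorem rpow_discrete_supersolution {γ x : ℝ} (hγ : 0 < γ) (hx : 1 < x) :
    (γ + 1/2) ^ 2 * x ^ (-(2 * γ) - 2) * x ^ (γ + 1/2) ≤
      (x - 1) ^ (-(2 * γ)) * (x ^ (γ + 1/2) - (x - 1) ^ (γ + 1/2)) -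
        x ^ (-(2 * γ)) * ((x + 1) ^ (γ + 1/2) - x ^ (γ + 1/2)) := by
  have hx0 : 0 < x := by linarith
  set r := x⁻¹
  have hr0 : 0 ≤ r := by positivity
  have hr1 : r < 1 := inv_lt_one_of_one_lt₀ hx
  have hm : x - 1 = x * (1 - r) := by simp only [r]; field_simp
  have hp : x + 1 = x * (1 + r) := by simp only [r]; field_simp
  have hpow : x ^ (-(2 * γ) - 2) = x ^ (-(2 * γ)) * r ^ 2 := by
    rw [rpow_sub hx0, rpow_two, div_eq_mul_inv, inv_pow]
  have hsplit : (1 - r) ^ (-(2 * γ)) * (1 - r) ^ (γ + 1/2) = (1 - r) ^ (1/2 - γ) := by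
    rw [← rpow_add (by linarith)]; ring_nf
  calc (γ + 1/2) ^ 2 * x ^ (-(2 * γ) - 2) * x ^ (γ + 1/2)
      = x ^ (-(2 * γ)) * x ^ (γ + 1/2) * ((γ + 1/2) ^ 2 * r ^ 2) := by rw [hpow]; ring
    _ ≤ x ^ (-(2 * γ)) * x ^ (γ + 1/2) *
          ((1 - r) ^ (-(2 * γ)) - (1 - r) ^ (1/2 - γ) - (1 + r) ^ (1/2 + γ) + 1) := by
        gcongr
        exact sq_mul_sq_le_rpow_combination hγ hr0 hr1
    _ = _ := by
        rw [hm, hp, mul_rpow hx0.le (by linarith), mul_rpow hx0.le (by linarith),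
          mul_rpow hx0.le (by linarith), ← hsplit, add_comm (1/2 : ℝ) γ]
        ring

theorem hardy_shifted_neg (α : ℝ) (hα : α < 0) (v : ℕ → ℝ)
    (hfin : ∃ N, ∀ n ≥ N, v n = 0) (h0 : v 0 = 0) :
    ∑' n : ℕ, ((n : ℝ) + 1) ^ α * (v (n + 1) - v n) ^ 2 ≥
      ((α - 1) ^ 2 / 4) * ∑' n : ℕ, ((n : ℝ) + 2) ^ (α - 2) * (v (n + 1)) ^ 2 := by
  obtain ⟨N, hN⟩ := hfin
  obtain ⟨γ, hγ, rfl⟩ : ∃ γ, 0 < γ ∧ α = -(2 * γ) := ⟨-α / 2, by linarith, by ring⟩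
  have hsuper (n : ℕ) :=
    rpow_discrete_supersolution hγ (x := (n : ℝ) + 2) (by linarith [n.cast_nonneg (α := ℝ)])
  rw [tsum_eq_sum (s := range N) fun n hn => ?lhs, tsum_eq_sum (s := range N) fun n hn => ?rhs,
    ge_iff_le, show (-(2 * γ) - 1) ^ 2 / 4 = (γ + 1/2) ^ 2 by ring, mul_sum]
  case lhs => rw [mem_range, not_lt] at hn; simp [hN n (by omega), hN (n + 1) (by omega)]
  case rhs => rw [mem_range, not_lt] at hn; simp [hN (n + 1) (by omega)]
  simp only [← mul_assoc]
  refine hardy_of_positive_supersolution _ (fun n => ((n : ℝ) + 1) ^ (γ + 1/2)) _ v N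
    (fun n => by positivity) (fun n => by positivity) (fun n => ?_) h0 (hN N le_rfl)
  convert hsuper n using 3 <;> push_cast <;> ring_nf
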